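/- Let P and P′ be quartiles and let i, j ∈ {1,2,3} with i ≠ j. If P′_i ≤ P_i (in the tile order), then the tiles P′_j and P_j are disjoint. In particular, if T is an i-tree then the tiles {P_j : P ∈ T} are pairwise disjoint for each j ≠ i. -/

import Mathlib

/-!
If the frequency intervals of `P_i` and `P'_i` meet, either `P` and `P'` have the same scale, hence
the same frequency index and disjoint time intervals, or, say, the frequency intervals of `P'` are
longer by a factor `2 ^ m`, `m ≥ 1`, and the frequency index `4 l' + (i - 1)` of `P'_i` is the
quotient of the index `4 l + (i - 1)` of `P_i` by `2 ^ m`. Were the same true for `j`, division by an even number would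
preserve two distinct offsets modulo 4, which it cannot. The hypothesis `P'_i ≤ P_i`, as well as
membership in a common `i`-tree, makes the frequency intervals of the `i`-th sub-tiles meet.
-/

open MeasureTheory Set

/-- The Walsh functions `w_l : ℝ → ℝ`, defined recursively by
`w_0 = χ_{[0,1)}`, `w_{2l}(x) = w_l(2x) + w_l(2x−1)`,
`w_{2l+1}(x) = w_l(2x) − w_l(2x−1)`. -/
noncomputable def walsh : ℕ → ℝ → ℝ
  | 0, x => if x ∈ Set.Ico (0:ℝ) 1 then 1 else 0
  | (n+1), x =>
      if (n+1) % 2 = 0 then walsh ((n+1)/2) (2*x) + walsh ((n+1)/2) (2*x - 1)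
      else walsh ((n+1)/2) (2*x) - walsh ((n+1)/2) (2*x - 1)
  decreasing_by all_goals exact Nat.div_lt_self (Nat.succ_pos n) one_lt_two

/-- A tile `[2^{-k}n, 2^{-k}(n+1)) × [2^k l, 2^k(l+1))`:
a half-open dyadic rectangle of area one. -/
structure Tile where
  k : ℤ
  n : ℤ
  l : ℤ
deriving DecidableEq

namespace Tile

/-- The time interval `I_P = [2^{-k}n, 2^{-k}(n+1))` of a tile. -/
noncomputable def I (p : Tile) : Set ℝ := Set.Ico ((2:ℝ)^(-p.k) * p.n) ((2:ℝ)^(-p.k) * (p.n+1))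

/-- The frequency interval `ω_P = [2^k l, 2^k(l+1))` of a tile. -/
noncomputable def freq (p : Tile) : Set ℝ := Set.Ico ((2:ℝ)^(p.k) * p.l) ((2:ℝ)^(p.k) * (p.l+1))

/-- The tile as a subset `I_P × ω_P` of the time-frequency plane. -/
noncomputable def area (p : Tile) : Set (ℝ × ℝ) := p.I ×ˢ p.freq

/-- The length `|I_P| = 2^{-k}` of the time interval of a tile. -/
noncomputable def len (p : Tile) : ℝ := (2:ℝ)^(-p.k)

/-- The center `ξ_P` of the frequency interval of a tile. -/
noncomputable def ξ (p : Tile) : ℝ := (2:ℝ)^(p.k) * ((p.l : ℝ) + 1/2)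

/-- The tile order: `p < q` iff `I_p ⊊ I_q` and `ω_q ⊆ ω_p`. -/
def lt (p q : Tile) : Prop := p.I ⊂ q.I ∧ q.freq ⊆ p.freq

/-- `p ≤ q` iff `p < q` or `p = q`. -/
def le (p q : Tile) : Prop := Tile.lt p q ∨ p = q

/-- The Walsh wave packet `φ_P(x) = 2^{k/2} w_l(2^k x − n)` of a tile. -/
noncomputable def wp (p : Tile) : ℝ → ℝ :=
  fun x => Real.sqrt ((2:ℝ)^(p.k)) * walsh p.l.toNat ((2:ℝ)^(p.k) * x - p.n)

end Tile

/-- A quartile `[2^{-k}n, 2^{-k}(n+1)) × [2^{k+2}l, 2^{k+2}(l+1))`: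
a dyadic rectangle of area four. -/
structure Quartile where
  k : ℤ
  n : ℤ
  l : ℤ
deriving DecidableEq

namespace Quartile

/-- The time interval `I_P` of a quartile. -/
noncomputable def I (P : Quartile) : Set ℝ := Set.Ico ((2:ℝ)^(-P.k) * P.n) ((2:ℝ)^(-P.k) * (P.n+1))

/-- The length `|I_P| = 2^{-k}` of the time interval of a quartile. -/
noncomputable def len (P : Quartile) : ℝ := (2:ℝ)^(-P.k)

/-- The `j`-th sub-tile `P_j = I_P × [2^k(4l+j−1), 2^k(4l+j))` of a quartile,
for `j = 1, 2, 3`. -/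
def tile (P : Quartile) (j : ℕ) : Tile := ⟨P.k, P.n, 4*P.l + ((j - 1 : ℕ) : ℤ)⟩

end Quartile

/-- `T` is an `i`-tree with top `top`: `P_i ≤ top_i` for all `P ∈ T`. -/
def IsTree (i : ℕ) (top : Quartile) (T : Finset Quartile) : Prop :=
  ∀ P ∈ T, Tile.le (P.tile i) (top.tile i)

/-- `size_j((a_P)_{P∈Ps})`: the sup over trees `T ⊆ Ps` which are `i`-trees for
some `i ≠ j` of `(|I_T|⁻¹ Σ_{P∈T} |a_{P_j}|²)^{1/2}`. -/
noncomputable def size (Ps : Finset Quartile) (j : ℕ) (a : Quartile → ℂ) : ℝ :=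
  sSup ((fun p : Quartile × Finset Quartile =>
      Real.sqrt ((∑ P ∈ p.2, ‖a P‖^2) / p.1.len)) ''
    {p | p.2 ⊆ Ps ∧ ∃ i ∈ ({1,2,3} : Set ℕ), i ≠ j ∧ IsTree i p.1 p.2})

/-- `energy_j((a_P)_{P∈Ps})`: the sup over subsets `D ⊆ Ps` with
`{P_j : P ∈ D}` pairwise disjoint of `(Σ_{P∈D} |a_{P_j}|²)^{1/2}`. -/
noncomputable def energy (Ps : Finset Quartile) (j : ℕ) (a : Quartile → ℂ) : ℝ :=
  sSup ((fun D : Finset Quartile => Real.sqrt (∑ P ∈ D, ‖a P‖^2)) ''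
    {D | D ⊆ Ps ∧ ∀ P ∈ D, ∀ P' ∈ D, P ≠ P' →
      Disjoint (P.tile j).area (P'.tile j).area})

/-- The `L^{1,∞}(I)` quasinorm `sup_{λ>0} λ |{x ∈ I : |g(x)| > λ}|`. -/
noncomputable def weakL1 (g : ℝ → ℝ) (I : Set ℝ) : ℝ :=
  sSup {r | ∃ lam : ℝ, 0 < lam ∧ r = lam * (volume {x ∈ I | lam < |g x|}).toReal}

/-- The square function `(Σ_{P∈T} |a_{P_j}|² χ_{I_P}/|I_P|)^{1/2}` of a tree. -/
noncomputable def treeFn (T : Finset Quartile) (a : Quartile → ℂ) : ℝ → ℝ :=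
  fun x => Real.sqrt (∑ P ∈ T, ‖a P‖^2 * (P.I.indicator (fun _ => (1:ℝ)) x) / P.len)

def dyadicIco (k a : ℤ) : Set ℝ := Ico ((2:ℝ) ^ k * a) ((2:ℝ) ^ k * (a + 1))

lemma left_mem_dyadicIco (k a : ℤ) : (2:ℝ) ^ k * a ∈ dyadicIco k a :=
  ⟨le_rfl, by have := zpow_pos (by norm_num : (0:ℝ) < 2) k; linarith⟩

lemma ediv_two_pow_eq_of_mem_dyadicIco {k a b : ℤ} {m : ℕ} {x : ℝ}
    (ha : x ∈ dyadicIco k a) (hb : x ∈ dyadicIco (k + m) b) : a / 2 ^ m = b := by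
  have hpos : (0:ℝ) < 2 ^ k := zpow_pos (by norm_num) k
  have hscale : (2:ℝ) ^ (k + m) = 2 ^ k * ((2 ^ m : ℤ) : ℝ) := by
    rw [zpow_add₀ (by norm_num), zpow_natCast]; push_cast; rfl
  rw [dyadicIco, hscale, mem_Ico] at hb
  obtain ⟨ha₁, ha₂⟩ := ha
  have hlo : (2 ^ m : ℤ) * b < a + 1 := by
    have := hb.1.trans_lt ha₂
    rw [mul_assoc, mul_lt_mul_iff_right₀ hpos] at this
    exact_mod_cast this
  have hhi : a < (2 ^ m : ℤ) * (b + 1) := by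
    have := ha₁.trans_lt hb.2
    rw [mul_assoc, mul_lt_mul_iff_right₀ hpos] at this
    exact_mod_cast this
  have hM : (0:ℤ) < 2 ^ m := by positivity
  apply le_antisymm
  · exact Int.lt_add_one_iff.1 ((Int.ediv_lt_iff_lt_mul hM).2 (by linarith))
  · exact (Int.le_ediv_iff_mul_le hM).2 (by linarith)

lemma eq_of_mem_dyadicIco {k a b : ℤ} {x : ℝ}
    (ha : x ∈ dyadicIco k a) (hb : x ∈ dyadicIco k b) : a = b := by
  simpa using ediv_two_pow_eq_of_mem_dyadicIco (m := 0) ha (by simpa using hb)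

lemma disjoint_dyadicIco_of_ne {k a b : ℤ} (hab : a ≠ b) :
    Disjoint (dyadicIco k a) (dyadicIco k b) :=
  disjoint_left.2 fun _ ha hb => hab (eq_of_mem_dyadicIco ha hb)

/-- Distinct offsets would force `4 * l + c' = M * (4 * l' + c')` for the larger offset `c'`,
impossible modulo 4 since `M` is even. -/
lemma eq_of_ediv_four_mul_add_eq {M l l' c c' : ℤ} (hM : Even M) (hM0 : 0 < M)
    (hc : 0 ≤ c ∧ c < 4) (hc' : 0 ≤ c' ∧ c' < 4)
    (h : (4 * l + c) / M = 4 * l' + c) (h' : (4 * l + c') / M = 4 * l' + c') : c = c' := by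
  rw [Int.ediv_eq_iff_of_pos hM0] at h h'
  obtain ⟨M₂, rfl⟩ := hM
  have expand (c : ℤ) : (4 * l' + c) * (M₂ + M₂) = 8 * (M₂ * l') + 2 * c * M₂ := by ring
  simp only [expand] at h h'
  generalize M₂ * l' = w at h h'
  obtain ⟨hc₀, hc₄⟩ := hc
  obtain ⟨hc₀', hc₄'⟩ := hc'
  interval_cases c <;> interval_cases c' <;> omega

lemma Quartile.tile_I (P : Quartile) (i : ℕ) : (P.tile i).I = dyadicIco (-P.k) P.n := rfl

lemma Quartile.tile_freq (P : Quartile) (i : ℕ) :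
    (P.tile i).freq = dyadicIco P.k (4 * P.l + ((i - 1 : ℕ) : ℤ)) := rfl

lemma Tile.freq_subset_of_le {p q : Tile} (h : Tile.le p q) : q.freq ⊆ p.freq := by
  rcases h with h | rfl
  exacts [h.2, subset_rfl]

lemma Tile.not_disjoint_freq_of_le_of_le {p q r : Tile} (hp : Tile.le p r) (hq : Tile.le q r) :
    ¬Disjoint p.freq q.freq :=
  not_disjoint_iff.2 ⟨_, Tile.freq_subset_of_le hp (left_mem_dyadicIco r.k r.l),
    Tile.freq_subset_of_le hq (left_mem_dyadicIco r.k r.l)⟩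

lemma Quartile.disjoint_tile_freq_of_k_lt {P P' : Quartile} {i j : ℕ} (hi : i ∈ Icc 1 4)
    (hj : j ∈ Icc 1 4) (hij : i ≠ j) (hk : P.k < P'.k)
    (hmeet : ¬Disjoint (P.tile i).freq (P'.tile i).freq) :
    Disjoint (P.tile j).freq (P'.tile j).freq := by
  simp only [mem_Icc] at hi hj
  rw [not_disjoint_iff] at hmeet
  obtain ⟨z, hz, hz'⟩ := hmeet
  rw [disjoint_iff_forall_ne]
  rintro y hy _ hy' rfl
  obtain ⟨m, hm⟩ := Int.le.dest hk.le
  have hm0 : m ≠ 0 := by omega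
  rw [Quartile.tile_freq] at hz hz' hy hy'
  rw [← hm] at hz' hy'
  have hi' := ediv_two_pow_eq_of_mem_dyadicIco (m := m) hz hz'
  have hj' := ediv_two_pow_eq_of_mem_dyadicIco (m := m) hy hy'
  have := eq_of_ediv_four_mul_add_eq ((Int.even_pow' hm0).2 even_two) (by positivity)
    (by omega) (by omega) hi' hj'
  omega

lemma Quartile.disjoint_tile_area_of_not_disjoint_freq {P P' : Quartile} {i j : ℕ}
    (hi : i ∈ Icc 1 4) (hj : j ∈ Icc 1 4) (hij : i ≠ j) (hne : P ≠ P')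
    (hmeet : ¬Disjoint (P.tile i).freq (P'.tile i).freq) :
    Disjoint (P.tile j).area (P'.tile j).area := by
  rcases lt_trichotomy P.k P'.k with hk | hk | hk
  · exact disjoint_prod.2 (.inr (disjoint_tile_freq_of_k_lt hi hj hij hk hmeet))
  · have hl : P.l = P'.l := by
      obtain ⟨z, hz, hz'⟩ := not_disjoint_iff.1 hmeet
      rw [tile_freq, hk] at hz
      rw [tile_freq] at hz'
      have := eq_of_mem_dyadicIco hz hz'
      omega
    have hn : P.n ≠ P'.n := by
      obtain ⟨k, n, l⟩ := P
      obtain ⟨k', n', l'⟩ := P'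
      simp_all
    refine disjoint_prod.2 (.inl ?_)
    rw [tile_I, tile_I, hk]
    exact disjoint_dyadicIco_of_ne hn
  · refine disjoint_prod.2 (.inr (disjoint_tile_freq_of_k_lt hi hj hij hk ?_).symm)
    rwa [disjoint_comm]

/-- if `P'_i ≤ P_i` for distinct quartiles `P ≠ P'` and `i ≠ j`,
then the tiles `P'_j` and `P_j` are disjoint; in particular, for an `i`-tree
`T`, the tiles `{P_j : P ∈ T}` are pairwise disjoint for each `j ≠ i`. -/
theorem lacunar :
    (∀ (P P' : Quartile) (i j : ℕ), i ∈ ({1,2,3} : Set ℕ) → j ∈ ({1,2,3} : Set ℕ) →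
      i ≠ j → P ≠ P' → Tile.le (P'.tile i) (P.tile i) →
      Disjoint ((P'.tile j).area) ((P.tile j).area)) ∧
    (∀ (i j : ℕ), i ∈ ({1,2,3} : Set ℕ) → j ∈ ({1,2,3} : Set ℕ) → i ≠ j →
      ∀ (top : Quartile) (T : Finset Quartile), IsTree i top T →
      ∀ P ∈ T, ∀ P' ∈ T, P ≠ P' →
        Disjoint ((P.tile j).area) ((P'.tile j).area)) := by
  have sub_Icc {i : ℕ} (hi : i ∈ ({1,2,3} : Set ℕ)) : i ∈ Icc 1 4 := by
    rcases hi with rfl | rfl | rfl <;> simp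
  refine ⟨fun P P' i j hi hj hij hne hle => ?_, fun i j hi hj hij top T hT P hP P' hP' hne => ?_⟩
  · exact Quartile.disjoint_tile_area_of_not_disjoint_freq (sub_Icc hi) (sub_Icc hj) hij
      hne.symm (Tile.not_disjoint_freq_of_le_of_le hle (.inr rfl))
  · exact Quartile.disjoint_tile_area_of_not_disjoint_freq (sub_Icc hi) (sub_Icc hj) hij
      hne (Tile.not_disjoint_freq_of_le_of_le (hT P hP) (hT P' hP'))
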